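/- Let G be a graph with distinguished vertex u and heights h(x) = d_G(u,x), and let (W1,W2) be a pair of wings for a quadruple (a,b,c,d) of vertices of G with W1 anticomplete to W2. Then for every integer i with h(a) ≤ i ≤ h(c), the vertex x of W1 with h(x) = i and the vertex y of W2 with h(y) = i are such that both (a,b,x,y) and (x,y,c,d) admit pairs of wings in G whose two wings are anticomplete to each other. -/

import Mathlib

open SimpleGraph

variable {V : Type*}

/-- A walk is monotone if its vertices have pairwise distinct heights. -/
def MonoWalk (G : SimpleGraph V) (u : V) {x y : V} (W : G.Walk x y) : Prop :=
  (W.support.map (fun z => G.dist u z)).Nodup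

/-- `P` is a shortest `x`-`y` path of `G`. -/
def IsShortestPath (G : SimpleGraph V) {x y : V} (P : G.Walk x y) : Prop :=
  P.IsPath ∧ P.length = G.dist x y

/-- `P` is an induced path of `G`: a path that equals the subgraph of `G`
induced by its vertex set. -/
def IsInducedPath (G : SimpleGraph V) {x y : V} (P : G.Walk x y) : Prop :=
  P.IsPath ∧ ∀ a b : V, a ∈ P.support → b ∈ P.support → G.Adj a b → P.toSubgraph.Adj a b

/-- A `uv`-trail of `G`: an induced `uv`-path of `G` that is not a shortest
`uv`-path of `G`. -/
def IsTrailPath (G : SimpleGraph V) (u v : V) (P : G.Walk u v) : Prop :=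
  IsInducedPath G P ∧ ¬ IsShortestPath G P

/-- A shortest `uv`-trail of `G`: a `uv`-trail of minimum number of edges. -/
def IsShortestTrail (G : SimpleGraph V) (u v : V) (P : G.Walk u v) : Prop :=
  IsTrailPath G u v P ∧ ∀ Q : G.Walk u v, IsTrailPath G u v Q → P.length ≤ Q.length

/-- `G` is `uv`-straight: every vertex lies on a shortest `uv`-path of `G`. -/
def Straight (G : SimpleGraph V) (u v : V) : Prop :=
  ∀ x : V, ∃ P : G.Walk u v, IsShortestPath G P ∧ x ∈ P.support

/-- Vertex sets `X` and `Y` are anticomplete in `G`: they are disjoint and there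
is no edge of `G` between them. -/
def Anticomplete (G : SimpleGraph V) (X Y : Set V) : Prop :=
  ∀ x ∈ X, ∀ y ∈ Y, x ≠ y ∧ ¬ G.Adj x y

/-- `x` and `y` are connected in the subgraph of `G` induced by `A`. -/
def ConnIn (G : SimpleGraph V) (A : Set V) (x y : V) : Prop :=
  ∃ W : G.Walk x y, ∀ z ∈ W.support, z ∈ A

/-- The closed neighborhood `N_G[A]` of a vertex set `A`. -/
def closedNbhd (G : SimpleGraph V) (A : Set V) : Set V :=
  {y | y ∈ A ∨ ∃ x ∈ A, G.Adj x y}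

/-- `(s, t)` is the twist pair of the `uv`-path `P`: `P[u,s]` is the maximal
monotone prefix of `P` and `P[t,v]` is the maximal monotone suffix of `P`. -/
def IsTwistPair [DecidableEq V] (G : SimpleGraph V) (u v : V) (P : G.Walk u v)
    (s t : V) : Prop :=
  ∃ (hs : s ∈ P.support) (ht : t ∈ P.support),
    MonoWalk G u (P.takeUntil s hs) ∧ MonoWalk G u (P.dropUntil t ht) ∧
    (∀ (s' : V) (hs' : s' ∈ P.support), MonoWalk G u (P.takeUntil s' hs') →
      (P.takeUntil s' hs').length ≤ (P.takeUntil s hs).length) ∧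
    (∀ (t' : V) (ht' : t' ∈ P.support), MonoWalk G u (P.dropUntil t' ht') →
      (P.dropUntil t' ht').length ≤ (P.dropUntil t ht).length)

/-- `(W1, W2)` is a pair of wings for the quadruple `(a, b, c, d)` in `G`
(with respect to heights measured from `u`): `W1` is a monotone `c`-`a*`-path
containing `a`, `W2` is a monotone `b`-`d*`-path containing `d`,
`h(a*) + 1 = h(a) = h(b) ≤ h(c) = h(d) = h(d*) - 1`, `W1 - c` is anticomplete
to `W2`, and `W1` is anticomplete to `W2 - b`. -/
def IsWingPair (G : SimpleGraph V) (u : V) (a b c d : V) {astar dstar : V}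
    (W1 : G.Walk c astar) (W2 : G.Walk b dstar) : Prop :=
  W1.IsPath ∧ W2.IsPath ∧ MonoWalk G u W1 ∧ MonoWalk G u W2 ∧
  a ∈ W1.support ∧ d ∈ W2.support ∧
  G.dist u astar + 1 = G.dist u a ∧ G.dist u a = G.dist u b ∧
  G.dist u b ≤ G.dist u c ∧ G.dist u c = G.dist u d ∧
  G.dist u d + 1 = G.dist u dstar ∧
  Anticomplete G {x | x ∈ W1.support ∧ x ≠ c} {x | x ∈ W2.support} ∧
  Anticomplete G {x | x ∈ W1.support} {x | x ∈ W2.support ∧ x ≠ b}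

/-- The quadruple `(a, b, c, d)` is winged in `G`. -/
def Winged (G : SimpleGraph V) (u : V) (a b c d : V) : Prop :=
  ∃ (astar dstar : V) (W1 : G.Walk c astar) (W2 : G.Walk b dstar),
    IsWingPair G u a b c d W1 W2

/-- The quadruple `(a, b, c, d)` admits a pair of wings `(W1, W2)` in `G` with
`W1` anticomplete to `W2`. -/
def WingedAnti (G : SimpleGraph V) (u : V) (a b c d : V) : Prop :=
  ∃ (astar dstar : V) (W1 : G.Walk c astar) (W2 : G.Walk b dstar),
    IsWingPair G u a b c d W1 W2 ∧
    Anticomplete G {x | x ∈ W1.support} {x | x ∈ W2.support}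

/-- For a `uv`-trail `P` of a `uv`-straight graph `G` with twist pair `(s, t)`,
a monotone `uc`-path `S` of `G` with `h(c) = h(s)` is a sidetrack for `P` if
(S1) `G` contains a monotone `tv`-path `T` with `S - c` anticomplete to `T` and
`S` anticomplete to `T - t`, and (S2) `S` contains the vertex `a` of `P[u,s]`
with `h(a) = h(t)`. -/
def IsSidetrack [DecidableEq V] (G : SimpleGraph V) (u v : V) (P : G.Walk u v)
    (s t : V) {c : V} (S : G.Walk u c) : Prop :=
  S.IsPath ∧ MonoWalk G u S ∧ G.dist u c = G.dist u s ∧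
  (∃ (T : G.Walk t v), T.IsPath ∧ MonoWalk G u T ∧
    Anticomplete G {x | x ∈ S.support ∧ x ≠ c} {x | x ∈ T.support} ∧
    Anticomplete G {x | x ∈ S.support} {x | x ∈ T.support ∧ x ≠ t}) ∧
  (∀ (hs : s ∈ P.support) (a : V),
    a ∈ (P.takeUntil s hs).support → G.dist u a = G.dist u t → a ∈ S.support)

/-!
Every wing needed is a subwalk of `W1` or `W2`. A monotone walk that does not end above its start
descends strictly: heights of adjacent vertices differ by at most one, so after any ascent the walk
would have to pass again through a height it has already visited. Hence heights decrease along
`W1` and increase along `W2`; cutting `W1` at `x` and at its vertex of height `i - 1`, and `W2` at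
`y` and at its vertex of height `i + 1`, yields the two pairs of wings, and every anticompleteness
condition is inherited from `W1` and `W2`.
-/

namespace SimpleGraph

variable {G : SimpleGraph V} {u p q : V}

lemma dist_le_dist_add_one_of_adj {v w : V} (h : G.Adj v w) : G.dist u w ≤ G.dist u v + 1 := by
  rcases h.diff_dist_adj (u := u) with h | h | h <;> omega

namespace Walk

lemma exists_mem_support_dist_eq (W : G.Walk p q) {k : ℕ} (hq : G.dist u q ≤ k)
    (hp : k ≤ G.dist u p) : ∃ z ∈ W.support, G.dist u z = k := by
  rcases hp.eq_or_lt with hp | hp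
  · exact ⟨p, W.start_mem_support, hp.symm⟩
  obtain ⟨d, hd, hfst, hsnd⟩ :=
    W.exists_boundary_dart {z | k < G.dist u z} hp (by simpa using hq)
  have := dist_le_dist_add_one_of_adj (u := u) d.adj.symm
  simp only [Set.mem_ofPred_eq, not_lt] at hfst hsnd
  exact ⟨d.snd, W.dart_snd_mem_support_of_mem_darts hd, by omega⟩

variable [DecidableEq V] {α : Type*} {f : V → α} {r : α → α → Prop} {W : G.Walk p q}
  {z w : V}

lemma mem_support_takeUntil_of_pairwise (hW : (W.support.map f).Pairwise r)
    (hz : z ∈ W.support) (hw : w ∈ W.support) (hzw : ¬ r (f w) (f z)) :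
    z ∈ (W.takeUntil w hw).support := by
  have hsplit := (W.takeUntil w hw).support_append (W.dropUntil w hw)
  rw [W.take_spec hw] at hsplit
  rw [hsplit] at hz hW
  rw [List.map_append, List.pairwise_append] at hW
  refine (List.mem_append.mp hz).resolve_right fun hz' => hzw ?_
  exact hW.2.2 _ (List.mem_map_of_mem (end_mem_support _)) _ (List.mem_map_of_mem hz')

lemma mem_support_dropUntil_of_pairwise (hW : (W.support.map f).Pairwise r)
    (hz : z ∈ W.support) (hw : w ∈ W.support) (hzw : ¬ r (f z) (f w)) :
    z ∈ (W.dropUntil w hw).support := by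
  have hsplit := support_append_eq_support_dropLast_append (W.takeUntil w hw) (W.dropUntil w hw)
  rw [W.take_spec hw] at hsplit
  rw [hsplit] at hz hW
  rw [List.map_append, List.pairwise_append] at hW
  refine (List.mem_append.mp hz).resolve_left fun hz' => hzw ?_
  exact hW.2.2 _ (List.mem_map_of_mem hz') _ (List.mem_map_of_mem (start_mem_support _))

end Walk

end SimpleGraph

section Monotone

variable {G : SimpleGraph V} {u p q p' q' : V} {W : G.Walk p q}

lemma MonoWalk.of_isSubwalk (hW : MonoWalk G u W) {W' : G.Walk p' q'} (h : W'.IsSubwalk W) :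
    MonoWalk G u W' :=
  ((Walk.isSubwalk_iff_support_isInfix.mp h).sublist.map _).nodup hW

lemma MonoWalk.reverse (hW : MonoWalk G u W) : MonoWalk G u W.reverse := by
  rwa [MonoWalk, Walk.support_reverse, List.map_reverse, List.nodup_reverse]

lemma MonoWalk.pairwise_gt (hW : MonoWalk G u W) (hqp : G.dist u q ≤ G.dist u p) :
    (W.support.map (G.dist u)).Pairwise (· > ·) := by
  induction W with
  | nil => simp
  | @cons p p' q hadj W ih =>
    simp only [MonoWalk, Walk.support_cons, List.map_cons, List.nodup_cons, List.mem_map,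
      not_exists, not_and] at hW
    obtain ⟨hfresh, hW⟩ := hW
    have hp' : G.dist u p' < G.dist u p := by
      by_contra! hle
      obtain ⟨z, hz, hzp⟩ := W.exists_mem_support_dist_eq hqp hle
      exact hfresh z hz hzp
    -- otherwise `h p' < h q ≤ h p ≤ h p' + 1` puts `q` at the height of `p`
    have hq' : G.dist u q ≤ G.dist u p' := by
      by_contra! hlt
      have := dist_le_dist_add_one_of_adj (u := u) hadj.symm
      exact hfresh q W.end_mem_support (by omega)
    have hpair := ih hW hq'
    refine List.pairwise_cons.mpr ⟨fun b hb => ?_, hpair⟩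
    rw [← W.cons_tail_support, List.map_cons, List.pairwise_cons] at hpair
    rw [← W.cons_tail_support, List.map_cons, List.mem_cons] at hb
    rcases hb with rfl | hb
    · exact hp'
    · exact (hpair.1 b hb).trans hp'

lemma MonoWalk.pairwise_lt (hW : MonoWalk G u W) (hpq : G.dist u p ≤ G.dist u q) :
    (W.support.map (G.dist u)).Pairwise (· < ·) := by
  have := hW.reverse.pairwise_gt hpq
  rwa [Walk.support_reverse, List.map_reverse, List.pairwise_reverse] at this

end Monotone

lemma Anticomplete.mono {G : SimpleGraph V} {X Y X' Y' : Set V} (h : Anticomplete G X Y)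
    (hX : X' ⊆ X) (hY : Y' ⊆ Y) : Anticomplete G X' Y' :=
  fun x hx y hy => h x (hX hx) y (hY hy)

lemma wingedAnti_of_anticomplete {G : SimpleGraph V} {u a b c d astar dstar : V}
    (W1 : G.Walk c astar) (W2 : G.Walk b dstar) (hW1 : W1.IsPath) (hW2 : W2.IsPath)
    (hW1m : MonoWalk G u W1) (hW2m : MonoWalk G u W2) (ha : a ∈ W1.support)
    (hd : d ∈ W2.support) (hastar : G.dist u astar + 1 = G.dist u a)
    (hab : G.dist u a = G.dist u b) (hbc : G.dist u b ≤ G.dist u c)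
    (hcd : G.dist u c = G.dist u d) (hdstar : G.dist u d + 1 = G.dist u dstar)
    (hanti : Anticomplete G {z | z ∈ W1.support} {z | z ∈ W2.support}) :
    WingedAnti G u a b c d :=
  ⟨astar, dstar, W1, W2, ⟨hW1, hW2, hW1m, hW2m, ha, hd, hastar, hab, hbc, hcd, hdstar,
    hanti.mono (fun _ hz => hz.1) le_rfl, hanti.mono le_rfl (fun _ hz => hz.1)⟩, hanti⟩

theorem statement15_general [DecidableEq V] (G : SimpleGraph V) (u : V)
    (a b c d astar dstar : V)
    (W1 : G.Walk c astar) (W2 : G.Walk b dstar)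
    (hwings : IsWingPair G u a b c d W1 W2)
    (hanti : Anticomplete G {z | z ∈ W1.support} {z | z ∈ W2.support})
    (i : ℕ) (hi1 : G.dist u a ≤ i) (hi2 : i ≤ G.dist u c)
    (x y : V) (hx : x ∈ W1.support) (hhx : G.dist u x = i)
    (hy : y ∈ W2.support) (hhy : G.dist u y = i) :
    WingedAnti G u a b x y ∧ WingedAnti G u x y c d := by
  obtain ⟨hW1, hW2, hW1m, hW2m, haW1, hdW2, hastar, hab, hbc, hcd, hdstar, -, -⟩ := hwings
  have hdesc := hW1m.pairwise_gt (by omega)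
  have hasc := hW2m.pairwise_lt (by omega)
  obtain ⟨x', hx', hhx'⟩ := W1.exists_mem_support_dist_eq (u := u) (k := i - 1)
    (by omega) (by omega)
  obtain ⟨y', hy', hhy'⟩ := W2.reverse.exists_mem_support_dist_eq (u := u) (k := i + 1)
    (by omega) (by omega)
  rw [Walk.support_reverse, List.mem_reverse] at hy'
  constructor
  · exact wingedAnti_of_anticomplete (W1.dropUntil x hx) (W2.takeUntil y' hy')
      (hW1.dropUntil hx) (hW2.takeUntil hy')
      (hW1m.of_isSubwalk (W1.isSubwalk_dropUntil hx))
      (hW2m.of_isSubwalk (W2.isSubwalk_takeUntil hy'))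
      (Walk.mem_support_dropUntil_of_pairwise hdesc haW1 hx (by omega))
      (Walk.mem_support_takeUntil_of_pairwise hasc hy hy' (by omega))
      hastar hab (by omega) (by omega) (by omega)
      (hanti.mono (W1.support_dropUntil_subset_support hx)
        (W2.support_takeUntil_subset_support hy'))
  · exact wingedAnti_of_anticomplete (W1.takeUntil x' hx') (W2.dropUntil y hy)
      (hW1.takeUntil hx') (hW2.dropUntil hy)
      (hW1m.of_isSubwalk (W1.isSubwalk_takeUntil hx'))
      (hW2m.of_isSubwalk (W2.isSubwalk_dropUntil hy))
      (Walk.mem_support_takeUntil_of_pairwise hdesc hx hx' (by omega))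
      (Walk.mem_support_dropUntil_of_pairwise hasc hdW2 hy (by omega))
      (by omega) (by omega) (by omega) hcd hdstar
      (hanti.mono (W1.support_takeUntil_subset_support hx')
        (W2.support_dropUntil_subset_support hy))

/-- Let `(W1, W2)` be a pair of wings for `(a, b, c, d)` in
`G` with `W1` anticomplete to `W2`. Then for every integer `i` with
`h(a) ≤ i ≤ h(c)`, the vertex `x` of `W1` with `h(x) = i` and the vertex `y` of
`W2` with `h(y) = i` are such that both `(a, b, x, y)` and `(x, y, c, d)` admit
pairs of wings in `G` whose two wings are anticomplete to each other. -/
theorem statement15 [Fintype V] [DecidableEq V] (G : SimpleGraph V) (u : V)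
    (a b c d astar dstar : V)
    (W1 : G.Walk c astar) (W2 : G.Walk b dstar)
    (hwings : IsWingPair G u a b c d W1 W2)
    (hanti : Anticomplete G {z | z ∈ W1.support} {z | z ∈ W2.support})
    (i : ℕ) (hi1 : G.dist u a ≤ i) (hi2 : i ≤ G.dist u c)
    (x y : V) (hx : x ∈ W1.support) (hhx : G.dist u x = i)
    (hy : y ∈ W2.support) (hhy : G.dist u y = i) :
    WingedAnti G u a b x y ∧ WingedAnti G u x y c d :=
  statement15_general G u a b c d astar dstar W1 W2 hwings hanti i hi1 hi2 x y hx hhx hy hhy
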